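/- For T = E M_u bounded on L²(Σ), the point spectrum of T away from 0 is σ_p(T) \ {0} = {λ ∈ ℂ \ {0} : μ({x : E(u)(x) = λ}) > 0}. -/

import Mathlib

/-!
If `T f = λ f` with `λ ≠ 0`, then `f = λ⁻¹ E(u f)` is `𝒜`-measurable, so the pull-out property
gives `λ f = E(u f) = f E(u)`; hence `E(u) = λ` on the support of `f`, which has positive measure.
Conversely, if `{E(u) = λ}` has positive measure, σ-finiteness of `μ` on `𝒜` yields an
`𝒜`-measurable subset `B` of finite positive measure, and `E(u 1_B) = 1_B E(u) = λ 1_B`.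
-/

open MeasureTheory ComplexConjugate

open scoped ENNReal

namespace MeasureTheory

variable {X : Type*} {m m0 : MeasurableSpace X} {μ : Measure X}

theorem measure_setOf_eq_pos_of_ae_mul_eq {M : Type*} [MulZeroClass M] [IsLeftCancelMulZero M]
    {f v : X → M} {l : M} (hfv : ∀ᵐ x ∂μ, f x * v x = f x * l) (hf : ¬f =ᵐ[μ] 0) :
    0 < μ {x | v x = l} := by
  refine pos_iff_ne_zero.2 fun hnull => hf ?_
  filter_upwards [hfv, measure_eq_zero_iff_ae_notMem.1 hnull] with x hmul hne
  by_contra hfx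
  exact hne (mul_left_cancel₀ hfx hmul)

theorem ae_mul_condExp_eq_of_smul_ae_eq_condExp {𝕜 : Type*} [RCLike 𝕜] {u f : X → 𝕜} {l : 𝕜}
    (hl : l ≠ 0) (hu : Integrable u μ) (huf : Integrable (fun x => u x * f x) μ)
    (heig : l • f =ᵐ[μ] μ[fun x => u x * f x|m]) :
    ∀ᵐ x ∂μ, f x * (μ[u|m]) x = f x * l := by
  set g : X → 𝕜 := l⁻¹ • μ[fun x => u x * f x|m]
  have hfg : f =ᵐ[μ] g := by
    filter_upwards [heig] with x hx
    simp only [g, Pi.smul_apply, ← hx, smul_eq_mul, inv_mul_cancel_left₀ hl]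
  have hgu_eq : (fun x => g x * u x) =ᵐ[μ] fun x => u x * f x := by
    filter_upwards [hfg] with x hx
    rw [hx, mul_comm]
  have hpull : μ[fun x => g x * u x|m] =ᵐ[μ] fun x => g x * (μ[u|m]) x := by
    simpa only [ContinuousLinearMap.mul_apply'] using
      condExp_bilin_of_stronglyMeasurable_left (ContinuousLinearMap.mul ℝ 𝕜)
        (stronglyMeasurable_condExp.const_smul l⁻¹) (huf.congr hgu_eq.symm) hu
  filter_upwards [hfg, hpull, condExp_congr_ae hgu_eq, heig] with x hfx hpx hcx hex
  rw [hfx, ← hpx, hcx, ← hex, Pi.smul_apply, smul_eq_mul, hfx, mul_comm]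

theorem condExp_indicator_eq_of_subset_setOf_condExp_eq {E : Type*} [NormedAddCommGroup E]
    [NormedSpace ℝ E] [CompleteSpace E] {u : X → E} {l : E} {B : Set X}
    (hu : Integrable u μ) (hB : MeasurableSet[m] B) (hBl : B ⊆ {x | (μ[u|m]) x = l}) :
    μ[B.indicator u|m] =ᵐ[μ] B.indicator fun _ => l :=
  (condExp_indicator hu hB).trans (.of_eq (Set.indicator_congr fun _ hx => hBl hx))

theorem exists_measurableSet_subset_measure_pos_lt_top (hm : m ≤ m0)
    [SigmaFinite (μ.trim hm)] {A : Set X} (hA : MeasurableSet[m] A) (hμA : 0 < μ A) :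
    ∃ B, MeasurableSet[m] B ∧ B ⊆ A ∧ 0 < μ B ∧ μ B < ∞ := by
  rw [← trim_measurableSet_eq hm hA] at hμA
  obtain ⟨B, hB, hBA, hB0, hBtop⟩ := Measure.exists_subset_measure_lt_top hA hμA
  rw [trim_measurableSet_eq hm hB] at hB0 hBtop
  exact ⟨B, hB, hBA, hB0, hBtop⟩

theorem indicatorConstLp_ne_zero {E : Type*} [NormedAddCommGroup E] {p : ℝ≥0∞} [Fact (1 ≤ p)]
    {B : Set X} (hB : MeasurableSet B) (hμB : μ B ≠ ∞) {c : E} (hc : c ≠ 0) (hμB0 : μ B ≠ 0) :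
    indicatorConstLp p hB hμB c ≠ 0 := by
  refine (norm_pos_iff (a := indicatorConstLp p hB hμB c)).1 ?_
  rw [norm_indicatorConstLp' (zero_lt_one.trans_le Fact.out).ne' hμB0]
  have : 0 < μ.real B := ENNReal.toReal_pos hμB0 hμB
  positivity

end MeasureTheory

theorem point_spectrum_conditional_mult_general {X : Type*} {m m0 : MeasurableSpace X} (hm : m ≤ m0)
    {μ : Measure X} [SigmaFinite (μ.trim hm)] (u : X → ℂ)
    (hu1 : Integrable u μ)
    (T : Lp ℂ 2 μ →L[ℂ] Lp ℂ 2 μ)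
    (hui : ∀ f : Lp ℂ 2 μ, Integrable (fun x => u x * (f : X → ℂ) x) μ)
    (hT : ∀ f : Lp ℂ 2 μ, T f =ᵐ[μ] μ[fun y => u y * (f : X → ℂ) y|m]) :
    {l : ℂ | l ≠ 0 ∧ ∃ f : Lp ℂ 2 μ, f ≠ 0 ∧ T f = l • f} =
      {l : ℂ | l ≠ 0 ∧ 0 < μ {x | (μ[u|m]) x = l}} := by
  ext l
  refine ⟨fun ⟨hl, f, hf0, hTf⟩ => ⟨hl, ?_⟩, fun ⟨hl, hpos⟩ => ⟨hl, ?_⟩⟩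
  · have heig : l • ⇑f =ᵐ[μ] μ[fun y => u y * f y|m] :=
      (Lp.coeFn_smul l f).symm.trans (hTf ▸ hT f)
    exact measure_setOf_eq_pos_of_ae_mul_eq
      (ae_mul_condExp_eq_of_smul_ae_eq_condExp hl hu1 (hui f) heig)
      (mt Lp.eq_zero_iff_ae_eq_zero.2 hf0)
  · obtain ⟨B, hB, hBl, hB0, hBtop⟩ := exists_measurableSet_subset_measure_pos_lt_top hm
      (stronglyMeasurable_condExp.measurable (measurableSet_singleton l)) hpos
    set f := indicatorConstLp 2 (hm B hB) hBtop.ne (1 : ℂ)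
    refine ⟨f, indicatorConstLp_ne_zero _ _ one_ne_zero hB0.ne', Lp.ext ?_⟩
    have hfB : ⇑f =ᵐ[μ] B.indicator fun _ => (1 : ℂ) := indicatorConstLp_coeFn
    have huf : (fun y => u y * f y) =ᵐ[μ] B.indicator u := by
      filter_upwards [hfB] with x hx
      by_cases h : x ∈ B <;> simp [hx, h]
    have hlf : B.indicator (fun _ => l) =ᵐ[μ] ⇑(l • f) := by
      filter_upwards [Lp.coeFn_smul l f, hfB] with x hx hfx
      by_cases h : x ∈ B <;> simp [hx, hfx, h]
    exact (hT f).trans <| (condExp_congr_ae huf).trans <|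
      (condExp_indicator_eq_of_subset_setOf_condExp_eq hu1 hB hBl).trans hlf

/-- For `T = E M_u` bounded on `L²(Σ)`, the point spectrum of `T` away from `0` is
`{λ ≠ 0 : μ({x : E(u)(x) = λ}) > 0}`. -/
theorem point_spectrum_conditional_mult {X : Type*} {m m0 : MeasurableSpace X} (hm : m ≤ m0)
    {μ : Measure X} [SigmaFinite μ] [SigmaFinite (μ.trim hm)] (u : X → ℂ)
    (hu1 : Integrable u μ)
    (T : Lp ℂ 2 μ →L[ℂ] Lp ℂ 2 μ)
    (hui : ∀ f : Lp ℂ 2 μ, Integrable (fun x => u x * (f : X → ℂ) x) μ)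
    (hT : ∀ f : Lp ℂ 2 μ, T f =ᵐ[μ] μ[fun y => u y * (f : X → ℂ) y|m]) :
    {l : ℂ | l ≠ 0 ∧ ∃ f : Lp ℂ 2 μ, f ≠ 0 ∧ T f = l • f} =
      {l : ℂ | l ≠ 0 ∧ 0 < μ {x | (μ[u|m]) x = l}} :=
  point_spectrum_conditional_mult_general hm u hu1 T hui hT
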